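/- arXiv:1804.10876 — 3 statements merged into one kernel-verified Lean document; each statement's English description precedes it below -/
import Mathlib

section
/- Let f : EuclideanSpace ℝ (Fin n) → ℝ be smooth. Then at every point x one has the Bochner identity (1/2)Δ(‖∇f‖²)(x) = ‖Hess f(x)‖_F² + ⟨∇f(x), ∇(Δf)(x)⟩. -/
open scoped InnerProductSpace

/-- The Hessian of `f` at `x`, as a continuous bilinear form (the second Fréchet
derivative). -/
noncomputable def hess {V : Type*} [NormedAddCommGroup V] [InnerProductSpace ℝ V]
    (f : V → ℝ) (x : V) : V →L[ℝ] V →L[ℝ] ℝ :=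
  fderiv ℝ (fderiv ℝ f) x

/-- The Laplacian of `f` at `x`: the trace of the Hessian with respect to an
orthonormal basis. -/
noncomputable def lap {V : Type*} [NormedAddCommGroup V] [InnerProductSpace ℝ V]
    [FiniteDimensional ℝ V] (f : V → ℝ) (x : V) : ℝ :=
  ∑ i, hess f x (stdOrthonormalBasis ℝ V i) (stdOrthonormalBasis ℝ V i)

/-- The Frobenius inner product of two continuous bilinear forms, computed with respect
to the standard orthonormal basis (independent of the choice of orthonormal basis). -/
noncomputable def frobC {V : Type*} [NormedAddCommGroup V] [InnerProductSpace ℝ V]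
    [FiniteDimensional ℝ V] (H H' : V →L[ℝ] V →L[ℝ] ℝ) : ℝ :=
  ∑ i, ∑ j,
    H (stdOrthonormalBasis ℝ V i) (stdOrthonormalBasis ℝ V j) *
      H' (stdOrthonormalBasis ℝ V i) (stdOrthonormalBasis ℝ V j)

set_option maxHeartbeats 1000000 in
/-- Bochner's identity on Euclidean space: for smooth `f`,
`½ Δ(‖∇f‖²) = ‖Hess f‖_F² + ⟨∇f, ∇(Δf)⟩` at every point. -/
theorem bochner_identity {n : ℕ} (f : EuclideanSpace ℝ (Fin n) → ℝ)
    (hf : ContDiff ℝ (⊤ : ℕ∞) f) (x : EuclideanSpace ℝ (Fin n)) :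
    (1 / 2 : ℝ) * lap (fun y => ‖gradient f y‖ ^ 2) x =
      frobC (hess f x) (hess f x) + ⟪gradient f x, gradient (lap f) x⟫_ℝ := by
  classical
  let b := stdOrthonormalBasis ℝ (EuclideanSpace ℝ (Fin n))
  let ι := Fin (Module.finrank ℝ (EuclideanSpace ℝ (Fin n)))
  let F := fderiv ℝ f
  let H := fderiv ℝ F
  let T := fderiv ℝ H
  have hF : ContDiff ℝ (⊤ : ℕ∞) F := hf.fderiv_right (by simp)
  have hH : ContDiff ℝ (⊤ : ℕ∞) H := hF.fderiv_right (by simp)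
  have hFd : ∀ z, HasFDerivAt F (H z) z := fun z => (hF.differentiable (by simp) z).hasFDerivAt
  have hHd : ∀ z, HasFDerivAt H (T z) z := fun z => (hH.differentiable (by simp) z).hasFDerivAt
  -- evaluation maps
  let A : ι → ((EuclideanSpace ℝ (Fin n) →L[ℝ] ℝ) →L[ℝ] ℝ) :=
    fun i => ContinuousLinearMap.apply ℝ ℝ (b i)
  let e : EuclideanSpace ℝ (Fin n) → EuclideanSpace ℝ (Fin n) →
      ((EuclideanSpace ℝ (Fin n) →L[ℝ] (EuclideanSpace ℝ (Fin n) →L[ℝ] ℝ)) →L[ℝ] ℝ) := fun v w =>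
    (ContinuousLinearMap.apply ℝ ℝ w).comp
      (ContinuousLinearMap.apply ℝ (EuclideanSpace ℝ (Fin n) →L[ℝ] ℝ) v)
  have hg : ∀ (i : ι) (z), HasFDerivAt (fun y => F y (b i)) ((A i).comp (H z)) z :=
    fun i z => (A i).hasFDerivAt.comp z (hFd z)
  -- symmetry of H
  have hsym2 : ∀ (y v w : EuclideanSpace ℝ (Fin n)), H y v w = H y w v := fun y v w =>
    (hf.contDiffAt.isSymmSndFDerivAt (by rw [minSmoothness_of_isRCLikeNormedField]; exact WithTop.coe_le_coe.mpr (le_top : (2 : ℕ∞) ≤ ⊤))).eq v w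
  -- T x u v w = fderiv of (y ↦ H y v w)
  have hTeval : ∀ v w, fderiv ℝ (fun y => H y v w) x = (e v w).comp (T x) := by
    intro v w
    have h := ((((hHd x).clm_apply (hasFDerivAt_const v x)).clm_apply
      (hasFDerivAt_const w x)).congr_fderiv (g' := (e v w).comp (T x))
        (ContinuousLinearMap.ext fun u => by simp [e])).fderiv
    exact h
  have hsymT23 : ∀ u v w, T x u v w = T x u w v := by
    intro u v w
    have h1 : (fun y => H y v w) = (fun y => H y w v) := funext fun y => hsym2 y v w
    have h2 := hTeval v w
    rw [h1, hTeval w v] at h2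
    have h3 := DFunLike.congr_fun h2 u
    simpa only [ContinuousLinearMap.comp_apply, ContinuousLinearMap.apply_apply, e] using h3.symm
  have hsymT12 : ∀ u v w, T x u v w = T x v u w := fun u v w =>
    DFunLike.congr_fun ((hF.contDiffAt.isSymmSndFDerivAt (by rw [minSmoothness_of_isRCLikeNormedField]; exact WithTop.coe_le_coe.mpr (le_top : (2 : ℕ∞) ≤ ⊤))).eq u v) w
  -- inner products with gradients
  have hinner : ∀ (g : EuclideanSpace ℝ (Fin n) → ℝ) (z v),
      ⟪gradient g z, v⟫_ℝ = fderiv ℝ g z v := by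
    intro g z v
    simp [gradient, InnerProductSpace.toDual_symm_apply]
  -- norm squared of gradient
  have hnorm : (fun y => ‖gradient f y‖ ^ 2) = fun y => ∑ i, (F y (b i))^2 := by
    funext y
    rw [← real_inner_self_eq_norm_sq,
      ← (stdOrthonormalBasis ℝ (EuclideanSpace ℝ (Fin n))).sum_inner_mul_inner
        (gradient f y) (gradient f y)]
    refine Finset.sum_congr rfl fun i _ => ?_
    simp only [real_inner_comm _ (gradient f y), hinner, pow_two]
    have hb2 : ⟪(stdOrthonormalBasis ℝ (EuclideanSpace ℝ (Fin n))) i, gradient f y⟫_ℝ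
        = F y (b i) := (real_inner_comm _ _).trans (hinner f y _)
    rw [hb2]
  -- first derivative of the sum of squares
  have hsq : ∀ (i : ι) (z), HasFDerivAt (fun y => (F y (b i))^2)
      ((2 * F z (b i)) • ((A i).comp (H z))) z := by
    intro i z
    have h1 := (hg i z).mul (hg i z)
    have h2 : (fun y => (F y (b i))^2) = fun y => F y (b i) * F y (b i) := by
      funext y; ring
    rw [h2, two_mul, add_smul]
    exact h1
  have hG : ∀ z, HasFDerivAt (fun y => ∑ i, (F y (b i))^2)
      (∑ i, (2 * F z (b i)) • ((A i).comp (H z))) z :=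
    fun z => HasFDerivAt.fun_sum (fun i _ => hsq i z)
  have hfderivh : fderiv ℝ (fun y => ∑ i, (F y (b i))^2)
      = fun z => ∑ i, (2 * F z (b i)) • ((A i).comp (H z)) :=
    funext fun z => (hG z).fderiv
  -- second derivative
  let D : ι → (EuclideanSpace ℝ (Fin n) →L[ℝ] (EuclideanSpace ℝ (Fin n) →L[ℝ] ℝ)) := fun i =>
    (2 * F x (b i)) • ((ContinuousLinearMap.compL ℝ (EuclideanSpace ℝ (Fin n))
        (EuclideanSpace ℝ (Fin n) →L[ℝ] ℝ) ℝ (A i)).comp (T x))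
      + ((2:ℝ) • ((A i).comp (H x))).smulRight ((A i).comp (H x))
  have hG2 : HasFDerivAt (fun z => ∑ i, (2 * F z (b i)) • ((A i).comp (H z))) (∑ i, D i) x := by
    refine HasFDerivAt.fun_sum (fun i _ => ?_)
    have hc : HasFDerivAt (fun z => 2 * F z (b i)) ((2:ℝ) • ((A i).comp (H x))) x :=
      (hg i x).const_mul 2
    have hL : HasFDerivAt (fun z => (A i).comp (H z))
        ((ContinuousLinearMap.compL ℝ (EuclideanSpace ℝ (Fin n))
          (EuclideanSpace ℝ (Fin n) →L[ℝ] ℝ) ℝ (A i)).comp (T x)) x := by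
      have h := ((hasFDerivAt_const (A i) x).clm_comp (hHd x)).congr_fderiv
        (g' := (ContinuousLinearMap.compL ℝ (EuclideanSpace ℝ (Fin n))
          (EuclideanSpace ℝ (Fin n) →L[ℝ] ℝ) ℝ (A i)).comp (T x))
        (ContinuousLinearMap.ext fun u => ContinuousLinearMap.ext fun v => by simp)
      exact h
    exact hc.smul hL
  -- the Hessian of ‖∇f‖² at x
  have hhess : hess (fun y => ‖gradient f y‖ ^ 2) x = ∑ i, D i := by
    rw [hess, hnorm, hfderivh]
    exact hG2.fderiv
  -- evaluate lap of ‖∇f‖²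
  have hlap : lap (fun y => ‖gradient f y‖ ^ 2) x
      = ∑ j, ∑ i, (2 * F x (b i) * T x (b j) (b j) (b i)
          + 2 * (H x (b j) (b i)) * (H x (b j) (b i))) := by
    rw [lap]
    refine Finset.sum_congr rfl fun j _ => ?_
    rw [hhess]
    simp only [ContinuousLinearMap.sum_apply]
    refine Finset.sum_congr rfl fun i _ => ?_
    simp only [D, A, ContinuousLinearMap.add_apply, ContinuousLinearMap.smul_apply,
      ContinuousLinearMap.coe_comp', Function.comp_apply, ContinuousLinearMap.smulRight_apply,
      ContinuousLinearMap.compL_apply, ContinuousLinearMap.apply_apply, smul_eq_mul]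
    try ring
  -- the gradient-of-laplacian term
  have hlapf : lap f = fun y => ∑ j, H y (b j) (b j) := rfl
  have hfderivlap : fderiv ℝ (lap f) x = ∑ j, (e (b j) (b j)).comp (T x) := by
    rw [hlapf]
    exact HasFDerivAt.fderiv <| HasFDerivAt.fun_sum fun j _ => by
      exact (((hHd x).clm_apply (hasFDerivAt_const (b j) x)).clm_apply
        (hasFDerivAt_const (b j) x)).congr_fderiv
          (ContinuousLinearMap.ext fun u => by simp [e])
  have hinner2 : ⟪gradient f x, gradient (lap f) x⟫_ℝ
      = ∑ i, F x (b i) * ∑ j, T x (b i) (b j) (b j) := by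
    rw [← (stdOrthonormalBasis ℝ (EuclideanSpace ℝ (Fin n))).sum_inner_mul_inner
        (gradient f x) (gradient (lap f) x)]
    refine Finset.sum_congr rfl fun i _ => ?_
    have h1 : ⟪gradient f x, (stdOrthonormalBasis ℝ (EuclideanSpace ℝ (Fin n))) i⟫_ℝ
        = F x (b i) := hinner f x _
    have h2 : ⟪(stdOrthonormalBasis ℝ (EuclideanSpace ℝ (Fin n))) i, gradient (lap f) x⟫_ℝ
        = ∑ j, T x (b i) (b j) (b j) := by
      rw [real_inner_comm, hinner (lap f), hfderivlap]
      simp only [ContinuousLinearMap.sum_apply, ContinuousLinearMap.coe_comp',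
        Function.comp_apply, ContinuousLinearMap.apply_apply, e]
      try rfl
    rw [h1, h2]
  have hfrob : frobC (hess f x) (hess f x) = ∑ i, ∑ j, H x (b i) (b j) * H x (b i) (b j) := rfl
  -- assemble
  rw [hlap, hfrob, hinner2]
  have hsymT : ∀ j i : ι, T x (b j) (b j) (b i) = T x (b i) (b j) (b j) := fun j i =>
    (hsymT23 (b j) (b j) (b i)).trans (hsymT12 (b j) (b i) (b j))
  calc (1/2 : ℝ) * ∑ j, ∑ i, (2 * F x (b i) * T x (b j) (b j) (b i)
          + 2 * (H x (b j) (b i)) * (H x (b j) (b i)))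
      = ∑ j, ∑ i, (F x (b i) * T x (b i) (b j) (b j)
          + H x (b j) (b i) * H x (b j) (b i)) := by
        rw [Finset.mul_sum]
        refine Finset.sum_congr rfl fun j _ => ?_
        rw [Finset.mul_sum]
        refine Finset.sum_congr rfl fun i _ => ?_
        rw [hsymT j i]; ring
    _ = ∑ j, ∑ i, H x (b j) (b i) * H x (b j) (b i)
          + ∑ j, ∑ i, F x (b i) * T x (b i) (b j) (b j) := by
        rw [← Finset.sum_add_distrib]
        refine Finset.sum_congr rfl fun j _ => ?_
        rw [← Finset.sum_add_distrib]
        refine Finset.sum_congr rfl fun i _ => ?_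
        ring
    _ = ∑ i, ∑ j, H x (b i) (b j) * H x (b i) (b j)
          + ∑ i, F x (b i) * ∑ j, T x (b i) (b j) (b j) := by
        rw [Finset.sum_comm (f := fun j i => F x (b i) * T x (b i) (b j) (b j))]
        simp_rw [← Finset.mul_sum]
end

section
/- Let f : EuclideanSpace ℝ (Fin n) → ℝ be smooth, let p ≥ 2 be a real number, and let x be a point with ∇f(x) ≠ 0. Then the p-Bochner formula holds at x: (1/p)Δ(‖∇f‖^p)(x) = (p−2)‖∇f(x)‖^{p−4}‖Hess f(x)(∇f(x),·)‖² + ‖∇f(x)‖^{p−2}( ‖Hess f(x)‖_F² + ⟨∇f(x), ∇(Δf)(x)⟩ ). -/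
open scoped InnerProductSpace

/-- The vector corresponding to a continuous linear functional under the Riesz
isomorphism: `⟨sharpC L, Y⟩ = L Y` for all `Y`. -/
noncomputable def sharpC {V : Type*} [NormedAddCommGroup V] [InnerProductSpace ℝ V]
    [CompleteSpace V] (L : V →L[ℝ] ℝ) : V :=
  (InnerProductSpace.toDual ℝ V).symm L

section Aux

variable {V : Type*} [NormedAddCommGroup V] [InnerProductSpace ℝ V] [CompleteSpace V]

theorem sharpC_inner (L : V →L[ℝ] ℝ) (v : V) : ⟪sharpC L, v⟫_ℝ = L v :=
  InnerProductSpace.toDual_symm_apply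

theorem inner_gradient' (f : V → ℝ) (x v : V) : ⟪gradient f x, v⟫_ℝ = fderiv ℝ f x v :=
  InnerProductSpace.toDual_symm_apply

omit [CompleteSpace V] in
theorem fderiv_apply_const {F : Type*} [NormedAddCommGroup F] [NormedSpace ℝ F]
    {c : V → V →L[ℝ] F} {x : V} (hc : DifferentiableAt ℝ c x) (u v : V) :
    fderiv ℝ (fun y => c y v) x u = fderiv ℝ c x u v := by
  rw [fderiv_clm_apply hc (differentiableAt_const v)]
  simp

omit [CompleteSpace V] in
theorem hess_symm {f : V → ℝ} (hf : ContDiff ℝ (⊤ : ℕ∞) f) (x u v : V) :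
    hess f x u v = hess f x v u :=
  hf.contDiffAt.isSymmSndFDerivAt (by rw [minSmoothness_of_isRCLikeNormedField]; exact WithTop.coe_le_coe.mpr (le_top : (2:ℕ∞) ≤ ⊤)) u v

omit [CompleteSpace V] in
theorem contDiff_hess {f : V → ℝ} (hf : ContDiff ℝ (⊤ : ℕ∞) f) :
    ContDiff ℝ (⊤ : ℕ∞) (fun y => hess f y) :=
  (hf.fderiv_right (m := ((⊤ : ℕ∞) : WithTop ℕ∞)) (by exact_mod_cast le_top)).fderiv_right (m := ((⊤ : ℕ∞) : WithTop ℕ∞)) (by exact_mod_cast le_top)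

omit [CompleteSpace V] in
theorem fderiv_hess_apply {f : V → ℝ} (hf : ContDiff ℝ (⊤ : ℕ∞) f) (x u v w : V) :
    fderiv ℝ (fun y => hess f y u v) x w = fderiv ℝ (fun y => hess f y) x w u v := by
  have hc : DifferentiableAt ℝ (fun y => hess f y u) x :=
    (((contDiff_hess hf).clm_apply contDiff_const).differentiable (by simp)) x
  rw [fderiv_apply_const hc w v, fderiv_apply_const (((contDiff_hess hf).differentiable (by simp)) x) w u]

omit [CompleteSpace V] in
theorem third_symm12 {f : V → ℝ} (hf : ContDiff ℝ (⊤ : ℕ∞) f) (x a c : V) :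
    fderiv ℝ (fun y => hess f y) x a c = fderiv ℝ (fun y => hess f y) x c a := by
  have h : IsSymmSndFDerivAt ℝ (fderiv ℝ f) x :=
    (hf.fderiv_right (m := ((⊤ : ℕ∞) : WithTop ℕ∞)) (by exact_mod_cast le_top)).contDiffAt.isSymmSndFDerivAt (by rw [minSmoothness_of_isRCLikeNormedField]; exact WithTop.coe_le_coe.mpr (le_top : (2:ℕ∞) ≤ ⊤))
  exact h a c

theorem contDiff_gradient {f : V → ℝ} (hf : ContDiff ℝ (⊤ : ℕ∞) f) :
    ContDiff ℝ (⊤ : ℕ∞) (fun y => gradient f y) := by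
  have h2 : ContDiff ℝ (⊤ : ℕ∞) (fun L : V →L[ℝ] ℝ => (InnerProductSpace.toDual ℝ V).symm L) :=
    (InnerProductSpace.toDual ℝ V).symm.toContinuousLinearEquiv.toContinuousLinearMap.contDiff
  exact h2.comp (hf.fderiv_right (by simp))

theorem fderiv_gradient {f : V → ℝ} (hf : ContDiff ℝ (⊤ : ℕ∞) f) (x u : V) :
    fderiv ℝ (fun y => gradient f y) x u = sharpC (hess f x u) := by
  have h1 : ContDiff ℝ (⊤ : ℕ∞) (fderiv ℝ f) := hf.fderiv_right (by simp)
  apply ext_inner_right ℝ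
  intro v
  rw [sharpC_inner]
  have e1 : fderiv ℝ (fun y => ⟪gradient f y, v⟫_ℝ) x u
      = ⟪fderiv ℝ (fun y => gradient f y) x u, v⟫_ℝ := by
    rw [fderiv_inner_apply ℝ ((contDiff_gradient hf).differentiable (by simp) x)
      (differentiableAt_const v) u]
    simp
  rw [← e1]
  have e2 : (fun y => ⟪gradient f y, v⟫_ℝ) = fun y => fderiv ℝ f y v := by
    funext y; exact inner_gradient' f y v
  rw [e2, fderiv_apply_const ((h1.differentiable (by simp)) x) u v]
  rfl

end Aux

set_option maxHeartbeats 2000000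

/-- The `p`-Bochner formula on Euclidean space: for smooth `f`, real `p ≥ 2`, at any
point where `∇f ≠ 0`,
`(1/p) Δ(‖∇f‖ᵖ) = (p−2)‖∇f‖^{p−4}‖Hess f(∇f,·)‖² + ‖∇f‖^{p−2}(‖Hess f‖_F² + ⟨∇f, ∇(Δf)⟩)`. -/

theorem p_bochner_formula {n : ℕ} (f : EuclideanSpace ℝ (Fin n) → ℝ)
    (hf : ContDiff ℝ (⊤ : ℕ∞) f) (p : ℝ) (hp : 2 ≤ p)
    (x : EuclideanSpace ℝ (Fin n)) (hx : gradient f x ≠ 0) :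
    (1 / p) * lap (fun y => ‖gradient f y‖ ^ p) x =
      (p - 2) * ‖gradient f x‖ ^ (p - 4) * ‖sharpC (hess f x (gradient f x))‖ ^ 2 +
        ‖gradient f x‖ ^ (p - 2) *
          (frobC (hess f x) (hess f x) + ⟪gradient f x, gradient (lap f) x⟫_ℝ) := by
  have hG : ContDiff ℝ (⊤ : ℕ∞) (fun y => gradient f y) := contDiff_gradient hf
  have hGd : Differentiable ℝ (fun y => gradient f y) := hG.differentiable (by simp)
  have hH : ContDiff ℝ (⊤ : ℕ∞) (fun y => hess f y) := contDiff_hess hf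
  have hHd : Differentiable ℝ (fun y => hess f y) := hH.differentiable (by simp)
  have hg : ContDiff ℝ (⊤ : ℕ∞) (fun y => ⟪gradient f y, gradient f y⟫_ℝ) := hG.inner ℝ hG
  have hgd : Differentiable ℝ (fun y => ⟪gradient f y, gradient f y⟫_ℝ) := hg.differentiable (by simp)
  have dg : ∀ y u, fderiv ℝ (fun y => ⟪gradient f y, gradient f y⟫_ℝ) y u
      = 2 * hess f y (gradient f y) u := by
    intro y u
    rw [fderiv_inner_apply ℝ (hGd y) (hGd y) u, fderiv_gradient hf y u]
    have hD : ⟪gradient f y, sharpC (hess f y u)⟫_ℝ = hess f y (gradient f y) u := by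
      rw [real_inner_comm, sharpC_inner]; exact hess_symm hf y u (gradient f y)
    have hD' : ⟪sharpC (hess f y u), gradient f y⟫_ℝ = hess f y (gradient f y) u := by
      rw [sharpC_inner]; exact hess_symm hf y u (gradient f y)
    rw [hD, hD']
    ring
  have dpsi : ∀ (v y u : EuclideanSpace ℝ (Fin n)),
      fderiv ℝ (fun z => hess f z (gradient f z) v) y u =
      fderiv ℝ (fun z => hess f z) y u (gradient f y) v
        + hess f y (sharpC (hess f y u)) v := by
    intro v y u
    have hc : DifferentiableAt ℝ (fun z => hess f z (gradient f z)) y :=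
      (hHd y).clm_apply (hGd y)
    rw [fderiv_clm_apply hc (differentiableAt_const v)]
    simp only [ContinuousLinearMap.add_apply, ContinuousLinearMap.comp_apply,
      ContinuousLinearMap.flip_apply, fderiv_const, fderiv_fun_const, Pi.zero_apply, map_zero,
      ContinuousLinearMap.zero_apply, zero_add, add_zero]
    rw [fderiv_clm_apply (hHd y) (hGd y)]
    simp only [ContinuousLinearMap.add_apply, ContinuousLinearMap.comp_apply,
      ContinuousLinearMap.flip_apply]
    rw [fderiv_gradient hf y u]
    ring
  have hpsid : ∀ (v : EuclideanSpace ℝ (Fin n)),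
      Differentiable ℝ (fun z => hess f z (gradient f z) v) := by
    intro v
    exact ((hHd.clm_apply hGd).clm_apply (differentiable_const v))
  have ddg : ∀ u : EuclideanSpace ℝ (Fin n),
      fderiv ℝ (fun y => fderiv ℝ (fun z => ⟪gradient f z, gradient f z⟫_ℝ) y u) x u =
      2 * (fderiv ℝ (fun z => hess f z) x u (gradient f x) u
        + hess f x (sharpC (hess f x u)) u) := by
    intro u
    have e : (fun y => fderiv ℝ (fun z => ⟪gradient f z, gradient f z⟫_ℝ) y u)
        = fun y => 2 * hess f y (gradient f y) u := funext fun y => dg y u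
    rw [e, fderiv_const_mul (hpsid u x) 2]
    simp only [ContinuousLinearMap.coe_smul', Pi.smul_apply, smul_eq_mul]
    rw [dpsi u x u]
  set q : ℝ := p / 2 with hqdef
  have hgx : (0:ℝ) < ⟪gradient f x, gradient f x⟫_ℝ := by
    rw [real_inner_self_eq_norm_sq]; exact pow_pos (norm_pos_iff.mpr hx) 2
  have hU : ∀ᶠ y in nhds x, (0:ℝ) < ⟪gradient f y, gradient f y⟫_ℝ :=
    (hg.continuous.tendsto x).eventually (eventually_gt_nhds hgx)
  have hder : ∀ y : EuclideanSpace ℝ (Fin n), 0 < ⟪gradient f y, gradient f y⟫_ℝ →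
      HasFDerivAt (fun z => ⟪gradient f z, gradient f z⟫_ℝ ^ q)
        ((q * ⟪gradient f y, gradient f y⟫_ℝ ^ (q - 1)) •
          fderiv ℝ (fun z => ⟪gradient f z, gradient f z⟫_ℝ) y) y := fun y hy =>
    (Real.hasDerivAt_rpow_const (p := q) (Or.inl hy.ne')).comp_hasFDerivAt (h₂ := fun t => t ^ q) y (hgd y).hasFDerivAt
  have hfd : fderiv ℝ (fun z => ⟪gradient f z, gradient f z⟫_ℝ ^ q) =ᶠ[nhds x]
      fun y => (q * ⟪gradient f y, gradient f y⟫_ℝ ^ (q - 1)) •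
        fderiv ℝ (fun z => ⟪gradient f z, gradient f z⟫_ℝ) y := by
    filter_upwards [hU] with y hy
    exact (hder y hy).fderiv
  have hcder : HasFDerivAt (fun y => q * ⟪gradient f y, gradient f y⟫_ℝ ^ (q - 1))
      ((q * ((q - 1) * ⟪gradient f x, gradient f x⟫_ℝ ^ (q - 2))) •
        fderiv ℝ (fun z => ⟪gradient f z, gradient f z⟫_ℝ) x) x := by
    have h1 : HasFDerivAt (fun y => ⟪gradient f y, gradient f y⟫_ℝ ^ (q - 1))
        (((q - 1) * ⟪gradient f x, gradient f x⟫_ℝ ^ (q - 1 - 1)) •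
          fderiv ℝ (fun z => ⟪gradient f z, gradient f z⟫_ℝ) x) x :=
      (Real.hasDerivAt_rpow_const (p := q - 1) (Or.inl hgx.ne')).comp_hasFDerivAt (h₂ := fun t => t ^ (q - 1)) x (hgd x).hasFDerivAt
    have e : q - 1 - 1 = q - 2 := by ring
    rw [e] at h1
    have h2 := h1.const_mul q
    rw [smul_smul] at h2
    exact h2
  have hLder : HasFDerivAt (fun y => fderiv ℝ (fun z => ⟪gradient f z, gradient f z⟫_ℝ) y)
      (fderiv ℝ (fderiv ℝ (fun z => ⟪gradient f z, gradient f z⟫_ℝ)) x) x :=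
    (((hg.fderiv_right (m := (⊤ : ℕ∞)) (by simp)).differentiable (by simp)) x).hasFDerivAt
  have hPhi := hcder.smul hLder
  have I1 : ∑ j, fderiv ℝ (fun z => hess f z) x (stdOrthonormalBasis ℝ (EuclideanSpace ℝ (Fin n)) j)
        (gradient f x) (stdOrthonormalBasis ℝ (EuclideanSpace ℝ (Fin n)) j)
      = ⟪gradient f x, gradient (lap f) x⟫_ℝ := by
    have e2 : ⟪gradient f x, gradient (lap f) x⟫_ℝ = fderiv ℝ (lap f) x (gradient f x) := by
      rw [real_inner_comm]; exact inner_gradient' (lap f) x (gradient f x)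
    have e3 : lap f = fun y => ∑ j, hess f y (stdOrthonormalBasis ℝ (EuclideanSpace ℝ (Fin n)) j)
        (stdOrthonormalBasis ℝ (EuclideanSpace ℝ (Fin n)) j) := rfl
    rw [e2, e3, fderiv_fun_sum (fun j _ =>
      ((hH.clm_apply contDiff_const).clm_apply contDiff_const).differentiable (by simp) x)]
    rw [ContinuousLinearMap.sum_apply]
    refine Finset.sum_congr rfl fun j _ => ?_
    rw [third_symm12 hf x _ (gradient f x),
      fderiv_hess_apply hf x _ _ (gradient f x)]
  have I2 : ∑ j, hess f x (sharpC (hess f x (stdOrthonormalBasis ℝ (EuclideanSpace ℝ (Fin n)) j)))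
        (stdOrthonormalBasis ℝ (EuclideanSpace ℝ (Fin n)) j)
      = frobC (hess f x) (hess f x) := by
    have e : ∀ j, hess f x (sharpC (hess f x (stdOrthonormalBasis ℝ (EuclideanSpace ℝ (Fin n)) j)))
        (stdOrthonormalBasis ℝ (EuclideanSpace ℝ (Fin n)) j)
        = ∑ i, hess f x (stdOrthonormalBasis ℝ (EuclideanSpace ℝ (Fin n)) j)
            (stdOrthonormalBasis ℝ (EuclideanSpace ℝ (Fin n)) i) *
          hess f x (stdOrthonormalBasis ℝ (EuclideanSpace ℝ (Fin n)) j)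
            (stdOrthonormalBasis ℝ (EuclideanSpace ℝ (Fin n)) i) := by
      intro j
      set w := sharpC (hess f x (stdOrthonormalBasis ℝ (EuclideanSpace ℝ (Fin n)) j)) with hw
      calc hess f x w (stdOrthonormalBasis ℝ (EuclideanSpace ℝ (Fin n)) j)
          = hess f x (stdOrthonormalBasis ℝ (EuclideanSpace ℝ (Fin n)) j) w :=
            hess_symm hf x w _
        _ = ⟪w, w⟫_ℝ := (sharpC_inner _ _).symm
        _ = ∑ i, ⟪w, stdOrthonormalBasis ℝ (EuclideanSpace ℝ (Fin n)) i⟫_ℝ *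
              ⟪stdOrthonormalBasis ℝ (EuclideanSpace ℝ (Fin n)) i, w⟫_ℝ :=
            ((stdOrthonormalBasis ℝ (EuclideanSpace ℝ (Fin n))).sum_inner_mul_inner w w).symm
        _ = _ := by
            refine Finset.sum_congr rfl fun i _ => ?_
            have h1 : ⟪w, stdOrthonormalBasis ℝ (EuclideanSpace ℝ (Fin n)) i⟫_ℝ
                = hess f x (stdOrthonormalBasis ℝ (EuclideanSpace ℝ (Fin n)) j)
                  (stdOrthonormalBasis ℝ (EuclideanSpace ℝ (Fin n)) i) := by
              rw [hw, sharpC_inner]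
            have h2 : ⟪stdOrthonormalBasis ℝ (EuclideanSpace ℝ (Fin n)) i, w⟫_ℝ
                = hess f x (stdOrthonormalBasis ℝ (EuclideanSpace ℝ (Fin n)) j)
                  (stdOrthonormalBasis ℝ (EuclideanSpace ℝ (Fin n)) i) := by
              rw [real_inner_comm]; exact h1
            rw [h1, h2]
    simp_rw [e]
    rfl
  have I3 : ∑ j, fderiv ℝ (fun z => ⟪gradient f z, gradient f z⟫_ℝ) x
        (stdOrthonormalBasis ℝ (EuclideanSpace ℝ (Fin n)) j) *
      fderiv ℝ (fun z => ⟪gradient f z, gradient f z⟫_ℝ) x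
        (stdOrthonormalBasis ℝ (EuclideanSpace ℝ (Fin n)) j)
      = 4 * ‖sharpC (hess f x (gradient f x))‖ ^ 2 := by
    set w := sharpC (hess f x (gradient f x)) with hw
    have e : ∀ j, fderiv ℝ (fun z => ⟪gradient f z, gradient f z⟫_ℝ) x
        (stdOrthonormalBasis ℝ (EuclideanSpace ℝ (Fin n)) j)
        = 2 * ⟪w, stdOrthonormalBasis ℝ (EuclideanSpace ℝ (Fin n)) j⟫_ℝ := by
      intro j
      rw [dg x _, hw, sharpC_inner]
    simp_rw [e]
    have e2 : ∀ j, (2 * ⟪w, stdOrthonormalBasis ℝ (EuclideanSpace ℝ (Fin n)) j⟫_ℝ) *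
        (2 * ⟪w, stdOrthonormalBasis ℝ (EuclideanSpace ℝ (Fin n)) j⟫_ℝ)
        = 4 * (⟪w, stdOrthonormalBasis ℝ (EuclideanSpace ℝ (Fin n)) j⟫_ℝ *
            ⟪stdOrthonormalBasis ℝ (EuclideanSpace ℝ (Fin n)) j, w⟫_ℝ) := by
      intro j
      rw [real_inner_comm (stdOrthonormalBasis ℝ (EuclideanSpace ℝ (Fin n)) j) w]
      ring
    simp_rw [e2, ← Finset.mul_sum,
      (stdOrthonormalBasis ℝ (EuclideanSpace ℝ (Fin n))).sum_inner_mul_inner w w,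
      real_inner_self_eq_norm_sq]
  have hrw : (fun y : EuclideanSpace ℝ (Fin n) => ‖gradient f y‖ ^ p)
      = fun y => ⟪gradient f y, gradient f y⟫_ℝ ^ q := by
    funext y
    rw [real_inner_self_eq_norm_sq, ← Real.rpow_natCast ‖gradient f y‖ 2,
      ← Real.rpow_mul (norm_nonneg _)]
    congr 1
    rw [hqdef]
    push_cast
    ring
  have hdc : DifferentiableAt ℝ (fderiv ℝ (fun z => ⟪gradient f z, gradient f z⟫_ℝ)) x :=
    ((hg.fderiv_right (m := (⊤ : ℕ∞)) (by simp)).differentiable (by simp)) x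
  have diag : ∀ u, fderiv ℝ (fderiv ℝ (fun z => ⟪gradient f z, gradient f z⟫_ℝ)) x u u
      = 2 * (fderiv ℝ (fun z => hess f z) x u (gradient f x) u
          + hess f x (sharpC (hess f x u)) u) :=
    fun u => (fderiv_apply_const hdc u u).symm.trans (ddg u)
  have hD2 := (Filter.EventuallyEq.fderiv_eq hfd).trans hPhi.fderiv
  have hlap : lap (fun y => ‖gradient f y‖ ^ p) x
      = (q * ⟪gradient f x, gradient f x⟫_ℝ ^ (q - 1)) *
          (2 * (⟪gradient f x, gradient (lap f) x⟫_ℝ + frobC (hess f x) (hess f x)))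
        + (q * ((q - 1) * ⟪gradient f x, gradient f x⟫_ℝ ^ (q - 2))) *
          (4 * ‖sharpC (hess f x (gradient f x))‖ ^ 2) := by
    have unf : lap (fun y => ⟪gradient f y, gradient f y⟫_ℝ ^ q) x
        = ∑ i, fderiv ℝ (fderiv ℝ (fun z => ⟪gradient f z, gradient f z⟫_ℝ ^ q)) x
            (stdOrthonormalBasis ℝ (EuclideanSpace ℝ (Fin n)) i)
            (stdOrthonormalBasis ℝ (EuclideanSpace ℝ (Fin n)) i) := rfl
    rw [hrw, unf]
    rw [hD2]
    simp only [ContinuousLinearMap.add_apply, ContinuousLinearMap.coe_smul', Pi.smul_apply,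
      ContinuousLinearMap.smulRight_apply, smul_eq_mul]
    simp_rw [diag]
    rw [Finset.sum_add_distrib, ← Finset.mul_sum, ← Finset.mul_sum, Finset.sum_add_distrib]
    simp_rw [mul_assoc]
    rw [← Finset.mul_sum]
    rw [I1, I2, ← Finset.mul_sum, ← Finset.mul_sum, I3]
  have hp0 : p ≠ 0 := by linarith
  have e1 : ⟪gradient f x, gradient f x⟫_ℝ ^ (q - 1) = ‖gradient f x‖ ^ (p - 2) := by
    rw [real_inner_self_eq_norm_sq, ← Real.rpow_natCast ‖gradient f x‖ 2,
      ← Real.rpow_mul (norm_nonneg _)]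
    congr 1
    rw [hqdef]
    push_cast
    ring
  have e2 : ⟪gradient f x, gradient f x⟫_ℝ ^ (q - 2) = ‖gradient f x‖ ^ (p - 4) := by
    rw [real_inner_self_eq_norm_sq, ← Real.rpow_natCast ‖gradient f x‖ 2,
      ← Real.rpow_mul (norm_nonneg _)]
    congr 1
    rw [hqdef]
    push_cast
    ring
  rw [hlap, e1, e2, hqdef]
  field_simp
  ring
end

section
/- Let V = ℂ^m viewed as a real inner product space with inner product ⟨v,w⟩ := Re(v,w) (the real part of the Hermitian inner product), and let J : V → V be multiplication by i. Let f : V → ℝ be smooth and define the vector field w by ⟨w(x), Y⟩ = Hess f(x)(J∇f(x), JY) for all Y ∈ V. Then at every point x, div w(x) = ⟪Hess f(x), J*Hess f(x)⟫_F, where (J*H)(X,Y) := H(JX,JY). -/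
open scoped InnerProductSpace

/-- The divergence of a vector field `w` at `x`: the trace of its derivative with
respect to an orthonormal basis. -/
noncomputable def diver {V : Type*} [NormedAddCommGroup V] [InnerProductSpace ℝ V]
    [FiniteDimensional ℝ V] (w : V → V) (x : V) : ℝ :=
  ∑ i, ⟪fderiv ℝ w x (stdOrthonormalBasis ℝ V i), stdOrthonormalBasis ℝ V i⟫_ℝ

/-- Multiplication by `i` on `ℂ^m`, viewed as a continuous `ℝ`-linear map. -/
noncomputable def Jmap (m : ℕ) : EuclideanSpace ℂ (Fin m) →L[ℝ] EuclideanSpace ℂ (Fin m) :=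
  Complex.I • ContinuousLinearMap.id ℝ (EuclideanSpace ℂ (Fin m))

/-- The vector field `w` determined by `⟨w(x), Y⟩ = Hess f(x)(J∇f(x), JY)` for all `Y`,
where `J` is multiplication by `i`. -/
noncomputable def wfield {m : ℕ} (f : EuclideanSpace ℂ (Fin m) → ℝ)
    (x : EuclideanSpace ℂ (Fin m)) : EuclideanSpace ℂ (Fin m) :=
  sharpC ((hess f x (Jmap m (gradient f x))).comp (Jmap m))

section Aux

variable {m : ℕ}

local notation "V" => EuclideanSpace ℂ (Fin m)

lemma inner_sharpC (L : V →L[ℝ] ℝ) (Y : V) : ⟪sharpC L, Y⟫_ℝ = L Y :=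
  InnerProductSpace.toDual_symm_apply

lemma J_skew (v w : V) : ⟪Jmap m v, w⟫_ℝ = -⟪v, Jmap m w⟫_ℝ := by
  simp only [Jmap, ContinuousLinearMap.smul_apply, ContinuousLinearMap.id_apply]
  simp only [PiLp.inner_apply, PiLp.smul_apply, Complex.inner, smul_eq_mul, map_mul,
    Complex.conj_I, ← Finset.sum_neg_distrib]
  congr 1; ext i; ring_nf
  simp [Complex.mul_re, Complex.mul_im]

lemma expand_sharpC (L : V →L[ℝ] ℝ) :
    sharpC L = ∑ j, L (stdOrthonormalBasis ℝ V j) • stdOrthonormalBasis ℝ V j := by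
  conv_lhs => rw [← (stdOrthonormalBasis ℝ V).sum_repr' (sharpC L)]
  congr 1 with j
  rw [real_inner_comm, inner_sharpC]

lemma trace_J_symm_zero (B : V →L[ℝ] V →L[ℝ] ℝ)
    (hB : ∀ X Y : V, B X Y = B Y X) :
    ∑ i, B (stdOrthonormalBasis ℝ V i) (Jmap m (stdOrthonormalBasis ℝ V i)) = 0 := by
  set e := stdOrthonormalBasis ℝ V with he
  have expand : ∀ (X w : V), B X w = ∑ j, ⟪e j, w⟫_ℝ * B X (e j) := by
    intro X w
    conv_lhs => rw [← e.sum_repr' w, map_sum]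
    simp [real_inner_comm]
  have key : (∑ i, B (e i) (Jmap m (e i))) = -∑ i, B (e i) (Jmap m (e i)) := by
    calc ∑ i, B (e i) (Jmap m (e i))
        = ∑ i, ∑ j, ⟪e j, Jmap m (e i)⟫_ℝ * B (e i) (e j) := by
          simp_rw [← expand]
      _ = ∑ i, ∑ j, -(⟪e i, Jmap m (e j)⟫_ℝ * B (e j) (e i)) := by
          refine Finset.sum_congr rfl fun i _ => Finset.sum_congr rfl fun j _ => ?_
          rw [hB, show ⟪e j, (Jmap m) (e i)⟫_ℝ = -⟪e i, (Jmap m) (e j)⟫_ℝ from by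
            rw [real_inner_comm, J_skew]]
          ring
      _ = -∑ j, ∑ i, ⟪e j, Jmap m (e i)⟫_ℝ * B (e i) (e j) := by
          rw [← Finset.sum_neg_distrib]
          refine Finset.sum_congr rfl fun i _ => ?_
          rw [← Finset.sum_neg_distrib]
      _ = -∑ i, ∑ j, ⟪e j, Jmap m (e i)⟫_ℝ * B (e i) (e j) := by rw [Finset.sum_comm]
      _ = -∑ i, B (e i) (Jmap m (e i)) := by simp_rw [← expand]
  linarith

end Aux

set_option maxHeartbeats 1000000 in
/-- On `ℂ^m` (viewed as a real inner product space, with `J` multiplication by `i`),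
for smooth `f : ℂ^m → ℝ` and the vector field `w` with `⟨w, Y⟩ = Hess f(J∇f, JY)`,
one has `div w = ⟪Hess f, J*Hess f⟫_F` everywhere. -/
theorem div_wfield_eq {m : ℕ} (f : EuclideanSpace ℂ (Fin m) → ℝ)
    (hf : ContDiff ℝ (⊤ : ℕ∞) f) (x : EuclideanSpace ℂ (Fin m)) :
    diver (wfield f) x =
      ∑ i, ∑ j,
        hess f x (stdOrthonormalBasis ℝ (EuclideanSpace ℂ (Fin m)) i)
            (stdOrthonormalBasis ℝ (EuclideanSpace ℂ (Fin m)) j) *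
          hess f x (Jmap m (stdOrthonormalBasis ℝ (EuclideanSpace ℂ (Fin m)) i))
            (Jmap m (stdOrthonormalBasis ℝ (EuclideanSpace ℂ (Fin m)) j)) := by
  classical
  -- smoothness bookkeeping
  have hg : ContDiff ℝ (⊤ : ℕ∞) (fderiv ℝ f) := hf.fderiv_right (by simp)
  have hhessC : ContDiff ℝ (⊤ : ℕ∞) (hess f) := hg.fderiv_right (by simp)
  have Hsym : ∀ (y X Y : EuclideanSpace ℂ (Fin m)), hess f y X Y = hess f y Y X := by
    intro y X Y
    exact ((hf.contDiffAt (x := y)).isSymmSndFDerivAt (by rw [minSmoothness_of_isRCLikeNormedField]; exact WithTop.coe_le_coe.mpr (le_top : (2 : ℕ∞) ≤ ⊤))) X Y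
  set e := stdOrthonormalBasis ℝ (EuclideanSpace ℂ (Fin m)) with he
  set H := hess f x with hH
  set R : (EuclideanSpace ℂ (Fin m) →L[ℝ] ℝ) →L[ℝ] EuclideanSpace ℂ (Fin m) :=
    ∑ j, (ContinuousLinearMap.apply ℝ ℝ (e j)).smulRight (e j) with hR
  have hRval : ∀ L : EuclideanSpace ℂ (Fin m) →L[ℝ] ℝ, R L = sharpC L := by
    intro L
    rw [expand_sharpC, hR]
    simp [ContinuousLinearMap.sum_apply]
    rfl
  have hgdiff : Differentiable ℝ (fderiv ℝ f) := hg.differentiable (by simp)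
  have hGat : HasFDerivAt (fderiv ℝ f) H x := (hgdiff x).hasFDerivAt
  have hgradAt : HasFDerivAt (gradient f) (R.comp H) x := by
    have h := R.hasFDerivAt.comp x hGat
    have hcoe : gradient f = ⇑R ∘ fderiv ℝ f := funext fun y => (hRval _).symm
    rw [hcoe]; exact h
  have hJgrad : HasFDerivAt (fun y => Jmap m (gradient f y)) ((Jmap m).comp (R.comp H)) x :=
    (Jmap m).hasFDerivAt.comp x hgradAt
  set T := fderiv ℝ (hess f) x with hT
  have hTat : HasFDerivAt (hess f) T x := (hhessC.differentiable (by simp) x).hasFDerivAt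
  set U : EuclideanSpace ℂ (Fin m) →L[ℝ] EuclideanSpace ℂ (Fin m) :=
    (Jmap m).comp (R.comp H) with hU
  set v := gradient f x with hv
  have hcAt : HasFDerivAt (fun y => hess f y (Jmap m (gradient f y)))
      (H.comp U + T.flip (Jmap m v)) x := hTat.clm_apply hJgrad
  set K : (EuclideanSpace ℂ (Fin m) →L[ℝ] ℝ) →L[ℝ] EuclideanSpace ℂ (Fin m) :=
    R.comp ((ContinuousLinearMap.compL ℝ (EuclideanSpace ℂ (Fin m))
      (EuclideanSpace ℂ (Fin m)) ℝ).flip (Jmap m)) with hK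
  have hKval : ∀ L : EuclideanSpace ℂ (Fin m) →L[ℝ] ℝ,
      K L = sharpC (L.comp (Jmap m)) := by
    intro L
    rw [hK, ContinuousLinearMap.comp_apply, ContinuousLinearMap.flip_apply,
      ContinuousLinearMap.compL_apply, hRval]
  have hWAt : HasFDerivAt (wfield f) (K.comp (H.comp U + T.flip (Jmap m v))) x := by
    have h := K.hasFDerivAt.comp x hcAt
    have hcoe : wfield f = ⇑K ∘ fun y => hess f y (Jmap m (gradient f y)) :=
      funext fun y => (hKval _).symm
    rw [hcoe]; exact h
  have hfd : fderiv ℝ (wfield f) x = K.comp (H.comp U + T.flip (Jmap m v)) := hWAt.fderiv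
  -- swap lemmas for the third derivative
  have hswap12 : ∀ X Y : EuclideanSpace ℂ (Fin m), T X Y = T Y X := by
    intro X Y
    exact ((hg.contDiffAt (x := x)).isSymmSndFDerivAt (by rw [minSmoothness_of_isRCLikeNormedField]; exact WithTop.coe_le_coe.mpr (le_top : (2 : ℕ∞) ≤ ⊤))) X Y
  have hswap23 : ∀ X Y u : EuclideanSpace ℂ (Fin m), T X Y u = T X u Y := by
    intro X Y u
    set A1 : (EuclideanSpace ℂ (Fin m) →L[ℝ] EuclideanSpace ℂ (Fin m) →L[ℝ] ℝ) →L[ℝ] ℝ :=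
      (ContinuousLinearMap.apply ℝ ℝ u).comp
        (ContinuousLinearMap.apply ℝ (EuclideanSpace ℂ (Fin m) →L[ℝ] ℝ) Y) with hA1
    set A2 : (EuclideanSpace ℂ (Fin m) →L[ℝ] EuclideanSpace ℂ (Fin m) →L[ℝ] ℝ) →L[ℝ] ℝ :=
      (ContinuousLinearMap.apply ℝ ℝ Y).comp
        (ContinuousLinearMap.apply ℝ (EuclideanSpace ℂ (Fin m) →L[ℝ] ℝ) u) with hA2
    have h1 := (hTat.clm_apply (hasFDerivAt_const Y x)).clm_apply (hasFDerivAt_const u x)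
    have h2 := (hTat.clm_apply (hasFDerivAt_const u x)).clm_apply (hasFDerivAt_const Y x)
    have e1 : ⇑A1 ∘ hess f = fun y => hess f y Y u := funext fun y => by
      simp [hA1]
    have e2 : ⇑A2 ∘ hess f = fun y => hess f y u Y := funext fun y => by
      simp [hA2]
    have heq : (fun y => hess f y Y u) = fun y => hess f y u Y :=
      funext fun y => Hsym y Y u
    rw [heq] at h1
    have h3 := h1.unique h2
    simpa using DFunLike.congr_fun h3 X
  have hBsym : ∀ X Y : EuclideanSpace ℂ (Fin m),
      (T.flip (Jmap m v)) X Y = (T.flip (Jmap m v)) Y X := by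
    intro X Y
    simp only [ContinuousLinearMap.flip_apply]
    calc T X (Jmap m v) Y = T X Y (Jmap m v) := hswap23 X (Jmap m v) Y
      _ = T Y X (Jmap m v) := DFunLike.congr_fun (hswap12 X Y) (Jmap m v)
      _ = T Y (Jmap m v) X := hswap23 Y X (Jmap m v)
  -- compute the divergence
  have hdiv : diver (wfield f) x =
      ∑ i, (H (U (e i)) (Jmap m (e i)) + (T.flip (Jmap m v)) (e i) (Jmap m (e i))) := by
    simp only [diver, hfd, ← he]
    refine Finset.sum_congr rfl fun i _ => ?_
    rw [ContinuousLinearMap.comp_apply, hKval, inner_sharpC]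
    simp [ContinuousLinearMap.add_apply]
  rw [hdiv, Finset.sum_add_distrib, trace_J_symm_zero (T.flip (Jmap m v)) hBsym, add_zero]
  -- expand the remaining sum
  have expand1 : ∀ i, H (U (e i)) (Jmap m (e i)) =
      ∑ j, H (e i) (e j) * H (Jmap m (e j)) (Jmap m (e i)) := by
    intro i
    have hUe : U (e i) = ∑ j, H (e i) (e j) • Jmap m (e j) := by
      rw [hU]
      simp only [ContinuousLinearMap.comp_apply]
      rw [hRval, expand_sharpC, map_sum]
      simp
      rfl
    rw [hUe, map_sum]
    simp [ContinuousLinearMap.sum_apply, mul_comm]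
  calc ∑ i, H (U (e i)) (Jmap m (e i))
      = ∑ i, ∑ j, H (e i) (e j) * H (Jmap m (e j)) (Jmap m (e i)) := by
        exact Finset.sum_congr rfl fun i _ => expand1 i
    _ = ∑ j, ∑ i, H (e i) (e j) * H (Jmap m (e j)) (Jmap m (e i)) := Finset.sum_comm
    _ = ∑ i, ∑ j, H (e i) (e j) * H (Jmap m (e i)) (Jmap m (e j)) := by
        refine Finset.sum_congr rfl fun i _ => Finset.sum_congr rfl fun j _ => ?_
        rw [Hsym x (e j) (e i)]
end
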